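/- Let n ≥ 1, μ > 0, let P be a real orthogonal n×n matrix, d ∈ ℝ^n, and set X = P·Diag(d)·Pᵀ and Z = P·Diag(φ_μ(d₁),…,φ_μ(d_n))·Pᵀ. Then Z is symmetric positive definite, Z is invertible, and Z − μ Z⁻¹ = X. -/

import Mathlib

/-!
Conjugation `A ↦ P A Pᵀ` by an orthogonal `P` preserves positive definiteness and commutes with
inversion, so everything reduces to the diagonal matrix `Diag(φ_μ(d))`, i.e. to the scalar
identity `φ_μ(t) - μ / φ_μ(t) = t`: `φ_μ(t)` is the positive root of `z² - t z - μ`.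
-/

open Matrix

/-- The scalar function `φ_μ(t) = (√(t² + 4μ) + t)/2`. -/
noncomputable def phiMu (μ t : ℝ) : ℝ := (Real.sqrt (t ^ 2 + 4 * μ) + t) / 2

lemma phiMu_pos {μ : ℝ} (hμ : 0 < μ) (t : ℝ) : 0 < phiMu μ t := by
  have h : |t| < √(t ^ 2 + 4 * μ) := by
    rw [← Real.sqrt_sq_eq_abs]
    exact Real.sqrt_lt_sqrt (sq_nonneg t) (by linarith)
  unfold phiMu
  linarith [neg_le_abs t]

lemma phiMu_sq_sub_mul {μ : ℝ} (hμ : 0 ≤ μ) (t : ℝ) : phiMu μ t ^ 2 - t * phiMu μ t = μ := by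
  have hs : √(t ^ 2 + 4 * μ) ^ 2 = t ^ 2 + 4 * μ := Real.sq_sqrt (by positivity)
  unfold phiMu
  linear_combination hs / 4

lemma phiMu_sub_mul_inv {μ : ℝ} (hμ : 0 < μ) (t : ℝ) :
    phiMu μ t - μ * (phiMu μ t)⁻¹ = t := by
  have hφ := (phiMu_pos hμ t).ne'
  field_simp
  linear_combination phiMu_sq_sub_mul hμ.le t

namespace Matrix

variable {ι : Type*} [Fintype ι] [DecidableEq ι]

lemma inv_diagonal_of_ne_zero {K : Type*} [Field K] {v : ι → K} (hv : ∀ i, v i ≠ 0) :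
    (diagonal v)⁻¹ = diagonal v⁻¹ :=
  inv_eq_left_inv <| by
    rw [diagonal_mul_diagonal, ← diagonal_one]
    exact congrArg diagonal (funext fun i => inv_mul_cancel₀ (hv i))

lemma inv_mul_mul_transpose_of_transpose_mul_self {α : Type*} [CommRing α] {P : Matrix ι ι α}
    (hP : Pᵀ * P = 1) (A : Matrix ι ι α) : (P * A * Pᵀ)⁻¹ = P * A⁻¹ * Pᵀ := by
  rw [mul_inv_rev, mul_inv_rev, inv_eq_left_inv hP, inv_eq_right_inv hP, Matrix.mul_assoc]

lemma PosDef.mul_mul_transpose_of_transpose_mul_self {P A : Matrix ι ι ℝ} (hA : A.PosDef)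
    (hP : Pᵀ * P = 1) : (P * A * Pᵀ).PosDef :=
  (IsUnit.posDef_star_right_conjugate_iff (IsUnit.of_mul_eq_one_right Pᵀ hP)).mpr hA

lemma diagonal_phiMu_sub_smul_inv {μ : ℝ} (hμ : 0 < μ) (d : ι → ℝ) :
    diagonal (fun i => phiMu μ (d i)) - μ • (diagonal fun i => phiMu μ (d i))⁻¹ = diagonal d := by
  rw [inv_diagonal_of_ne_zero fun i => (phiMu_pos hμ (d i)).ne', ← diagonal_smul,
    diagonal_sub]
  exact congrArg diagonal (funext fun i => phiMu_sub_mul_inv hμ (d i))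

end Matrix

theorem phi_matrix_posdef_and_equation_general (n : ℕ) (μ : ℝ) (hμ : 0 < μ)
    (P : Matrix (Fin n) (Fin n) ℝ) (hP : Pᵀ * P = 1) (d : Fin n → ℝ)
    (X Z : Matrix (Fin n) (Fin n) ℝ)
    (hX : X = P * Matrix.diagonal d * Pᵀ)
    (hZ : Z = P * Matrix.diagonal (fun i => phiMu μ (d i)) * Pᵀ) :
    Z.PosDef ∧ IsUnit Z ∧ Z - μ • Z⁻¹ = X := by
  subst hX hZ
  have hZ : (P * diagonal (fun i => phiMu μ (d i)) * Pᵀ).PosDef :=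
    (PosDef.diagonal fun i => phiMu_pos hμ (d i)).mul_mul_transpose_of_transpose_mul_self hP
  refine ⟨hZ, hZ.isUnit, ?_⟩
  rw [inv_mul_mul_transpose_of_transpose_mul_self hP, ← diagonal_phiMu_sub_smul_inv hμ d,
    Matrix.mul_sub, Matrix.sub_mul, Matrix.mul_smul, Matrix.smul_mul]

/-- for `μ > 0`, `P` orthogonal, `X = P Diag(d) Pᵀ` and
`Z = P Diag(φ_μ(d)) Pᵀ`, the matrix `Z` is symmetric positive definite, invertible,
and satisfies `Z − μ Z⁻¹ = X`. -/
theorem phi_matrix_posdef_and_equation (n : ℕ) (hn : 1 ≤ n) (μ : ℝ) (hμ : 0 < μ)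
    (P : Matrix (Fin n) (Fin n) ℝ) (hP : Pᵀ * P = 1) (d : Fin n → ℝ)
    (X Z : Matrix (Fin n) (Fin n) ℝ)
    (hX : X = P * Matrix.diagonal d * Pᵀ)
    (hZ : Z = P * Matrix.diagonal (fun i => phiMu μ (d i)) * Pᵀ) :
    Z.PosDef ∧ IsUnit Z ∧ Z - μ • Z⁻¹ = X :=
  phi_matrix_posdef_and_equation_general n μ hμ P hP d X Z hX hZ
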